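/- arXiv:2001.02827 — 3 statements merged into one kernel-verified Lean document; each statement's English description precedes it below -/
import Mathlib

section
/- Let (X, Π) be a weighted pure d-dimensional simplicial complex with n = |X(0)| vertices. If 2(d + 1) ≤ n, then λ₂(P∨_d) ≥ 1 − 2/(d+1), i.e., the spectral gap of the top down-up walk is at most 2/(d+1). -/
open Finset

/-- A weighted pure `d`-dimensional simplicial complex on a finite ground set `V`.
Faces are finsets; a face of cardinality `m` has dimension `m - 1` (so `X(j)` is the
set of faces of cardinality `j + 1`).  The family of faces is downward closed, every
face is contained in a face of cardinality `d + 1` (purity), and a probability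
distribution `Π = Π_d` (positive weights summing to `1`) is given on the
top-dimensional faces. -/
structure WSC (V : Type*) [DecidableEq V] [Fintype V] (d : ℕ) where
  faces : Finset (Finset V)
  empty_mem : ∅ ∈ faces
  down_closed : ∀ β ∈ faces, ∀ α ⊆ β, α ∈ faces
  pure : ∀ α ∈ faces, ∃ β ∈ faces, α ⊆ β ∧ β.card = d + 1
  dim_le : ∀ α ∈ faces, α.card ≤ d + 1
  weight : Finset V → ℝ
  weight_pos : ∀ β ∈ faces, β.card = d + 1 → 0 < weight β
  weight_zero : ∀ β : Finset V, β ∉ faces ∨ β.card ≠ d + 1 → weight β = 0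
  weight_sum : ∑ β ∈ faces.filter (fun β => β.card = d + 1), weight β = 1

namespace WSC

variable {V : Type*} [DecidableEq V] [Fintype V] {d : ℕ}

/-- Auxiliary recursion for the marginal distributions: `Waux X t` is the marginal
distribution `Π_{d - t}` on faces of cardinality `d + 1 - t`, defined by
`Π_j(α) = (1/(j+2)) ∑_{β ∈ X(j+1), β ⊇ α} Π_{j+1}(β)`. -/
noncomputable def Waux (X : WSC V d) : ℕ → Finset V → ℝ
  | 0 => X.weight
  | (t + 1) => fun α =>
      (1 / ((d + 1 - t : ℕ) : ℝ)) *
        ∑ β ∈ X.faces.filter (fun β => α ⊆ β ∧ β.card = d + 1 - t), X.Waux t β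

/-- `X.W m α` is the marginal probability `Π_{m-1}(α)` of the face `α` of cardinality
`m` (dimension `m - 1`). -/
noncomputable def W (X : WSC V d) (m : ℕ) : Finset V → ℝ := X.Waux (d + 1 - m)

/-- The inner product `⟨f, g⟩_{Π_{m-1}}` on `ℝ^{X(m-1)}` (faces of cardinality `m`). -/
noncomputable def inn (X : WSC V d) (m : ℕ) (f g : Finset V → ℝ) : ℝ :=
  ∑ α ∈ X.faces.filter (fun α => α.card = m), X.W m α * f α * g α

/-- The up operator `U_j`: `(U_j f)(β) = (1/(j+2)) ∑_{x ∈ β} f(β \ {x})`, for `β` of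
cardinality `j + 2`.  (The formula is uniform in the cardinality of `β`.) -/
noncomputable def upOp (f : Finset V → ℝ) : Finset V → ℝ :=
  fun β => (1 / (β.card : ℝ)) * ∑ x ∈ β, f (β.erase x)

/-- The down operator `D_{j+1}`:
`(D_{j+1} g)(α) = ∑_{β ∈ X(j+1), β ⊇ α} Π_{j+1}(β) g(β) / ((j+2) Π_j(α))`, for `α` of
cardinality `j + 1`.  (The formula is uniform in the cardinality of `α`.) -/
noncomputable def downOp (X : WSC V d) (g : Finset V → ℝ) : Finset V → ℝ :=
  fun α => ∑ β ∈ X.faces.filter (fun β => α ⊆ β ∧ β.card = α.card + 1),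
      (X.W (α.card + 1) β * g β) / (((α.card : ℝ) + 1) * X.W α.card α)

/-- The down-up walk `P∨_k = U_{k-1} D_k`, acting on functions on `X(k)` (faces of
cardinality `k + 1`). -/
noncomputable def downUp (X : WSC V d) (f : Finset V → ℝ) : Finset V → ℝ :=
  upOp (X.downOp f)

/-- The up-down walk `P∧_k = D_{k+1} U_k`, acting on functions on `X(k)` (faces of
cardinality `k + 1`). -/
noncomputable def upDown (X : WSC V d) (f : Finset V → ℝ) : Finset V → ℝ :=
  X.downOp (upOp f)

/-- The `k`-th non-lazy up-down walk `N_k = ((k+2)/(k+1)) (P∧_k - (1/(k+2)) I)`. -/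
noncomputable def nonLazy (X : WSC V d) (k : ℕ) (f : Finset V → ℝ) : Finset V → ℝ :=
  fun α => (((k : ℝ) + 2) / ((k : ℝ) + 1)) * (X.upDown f α - (1 / ((k : ℝ) + 2)) * f α)

/-- The up-down walk `U_{a,b} = D_{a+1} ⋯ D_b · U_{b-1} ⋯ U_a` on `X(a)` through
`X(b)`, where `t = b - a`. -/
noncomputable def upDownAB (X : WSC V d) (t : ℕ) (f : Finset V → ℝ) : Finset V → ℝ :=
  (X.downOp)^[t] (upOp^[t] f)

/-- The second largest eigenvalue of a row-stochastic operator `M` on `ℝ^{X(m-1)}`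
(faces of cardinality `m`) which is self-adjoint with respect to `⟨·,·⟩_{Π_{m-1}}`
and has stationary distribution `Π_{m-1}`: by the variational principle it is the
supremum of the Rayleigh quotients of (nonzero) functions orthogonal to the
constant function `1`. -/
noncomputable def lam2 (X : WSC V d) (m : ℕ) (M : (Finset V → ℝ) → Finset V → ℝ) : ℝ :=
  sSup { r : ℝ | ∃ f : Finset V → ℝ,
    X.inn m f (fun _ => 1) = 0 ∧ X.inn m f f ≠ 0 ∧
    r = X.inn m f (M f) / X.inn m f f }

/-- The vertices of the link `X_α`: those `x ∉ α` with `α ∪ {x} ∈ X`. -/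
def linkVerts (X : WSC V d) (α : Finset V) : Finset V :=
  Finset.univ.filter (fun x => x ∉ α ∧ insert x α ∈ X.faces)

/-- The link distribution `Π^α_l(τ) = Π_{j+1+l}(α ∪ τ) / (C(|α ∪ τ|, |α|) · Π_j(α))`
for a face `α` of dimension `j` and `τ ∈ X_α(l)`. -/
noncomputable def linkPi (X : WSC V d) (α τ : Finset V) : ℝ :=
  X.W (α ∪ τ).card (α ∪ τ) / ((Nat.choose (α ∪ τ).card α.card : ℝ) * X.W α.card α)

/-- The random walk matrix `M_α` of the graph of the link `X_α`, with entries
`M_α(x, y) = Π^α_1({x, y}) / (2 Π^α_0(x))` for `{x, y} ∈ X_α(1)` and `0` otherwise,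
viewed as an operator on functions on the vertices of the link. -/
noncomputable def linkWalk (X : WSC V d) (α : Finset V) (f : V → ℝ) : V → ℝ :=
  fun x => ∑ y ∈ (X.linkVerts α).filter
      (fun y => y ≠ x ∧ insert y (insert x α) ∈ X.faces),
    (X.linkPi α {x, y} / (2 * X.linkPi α {x})) * f y

/-- The projector `J_α` onto the constant functions on the link: `J_α g` is the
constant function with value `E_{x ∼ Π^α_0}[g(x)]`. -/
noncomputable def linkJ (X : WSC V d) (α : Finset V) (g : V → ℝ) : V → ℝ :=
  fun _ => ∑ x ∈ X.linkVerts α, X.linkPi α {x} * g x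

/-- The inner product `⟨g, h⟩_{Π^α_0}` on functions on the vertices of the link. -/
noncomputable def linkInner (X : WSC V d) (α : Finset V) (g h : V → ℝ) : ℝ :=
  ∑ x ∈ X.linkVerts α, X.linkPi α {x} * g x * h x

/-- The second largest eigenvalue `λ₂(M_α)` of the random walk matrix of the graph
of the link `X_α`, via the variational principle. -/
noncomputable def linkLam2 (X : WSC V d) (α : Finset V) : ℝ :=
  sSup { r : ℝ | ∃ f : V → ℝ,
    X.linkInner α f (fun _ => 1) = 0 ∧ X.linkInner α f f ≠ 0 ∧
    r = X.linkInner α f (X.linkWalk α f) / X.linkInner α f f }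

/-- `X.gammaC m` is `γ_{m-1} = max_{α ∈ X(m-1)} λ₂(M_α)`, the maximum over faces `α`
of cardinality `m` (dimension `m - 1`) of the second eigenvalue of the link walk. -/
noncomputable def gammaC (X : WSC V d) (m : ℕ) : ℝ :=
  sSup { r : ℝ | ∃ α ∈ X.faces, α.card = m ∧ r = X.linkLam2 α }

end WSC

/-!
The test function is `f β = 1[v ∈ β] - c`, where `c = Π(facets through v)`. Summed over the
vertices these masses give `d + 1`, so `n ≥ 2(d + 1)` provides a vertex with `c ≤ 1/2`.
Writing `Q α` and `T g α` for the mass and the `Π`-integral of `g` over the facets containing a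
ridge `α`, one has `⟨f, P∨ g⟩ = (d + 1)⁻¹ ∑_α T f α * T g α / Q α`. For the indicator of the
star of `v`, the ridges through `v` alone contribute `d c / (d + 1)`, so
`⟨f, P∨ f⟩ ≥ d c / (d + 1) - c²`, while `⟨f, f⟩ = c (1 - c)`; the quotient is at least
`1 - 2 / (d + 1)` exactly when `c ≤ 1/2`. The same formula and Cauchy–Schwarz give
`⟨f, P∨ f⟩ ≤ ⟨f, f⟩`, so the Rayleigh quotients are bounded and `λ₂` dominates the test quotient.
-/

theorem Finset.powersetCard_eq_image_erase {α : Type*} [DecidableEq α] {s : Finset α} {n : ℕ}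
    (hs : #s = n + 1) : s.powersetCard n = s.image s.erase := by
  ext t
  simp only [mem_powersetCard, mem_image]
  constructor
  · rintro ⟨hts, htn⟩
    obtain ⟨x, hxs, hxt⟩ := exists_of_ssubset (ssubset_of_subset_of_ne hts (by grind))
    refine ⟨x, hxs, (eq_of_subset_of_card_le (subset_erase.2 ⟨hts, hxt⟩) ?_).symm⟩
    rw [card_erase_of_mem hxs]
    omega
  · rintro ⟨x, hxs, rfl⟩
    exact ⟨erase_subset x s, by rw [card_erase_of_mem hxs, hs, Nat.add_sub_cancel]⟩

theorem Finset.sum_powersetCard_eq_sum_erase {α M : Type*} [DecidableEq α] [AddCommMonoid M]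
    {s : Finset α} {n : ℕ} (hs : #s = n + 1) (F : Finset α → M) :
    ∑ t ∈ s.powersetCard n, F t = ∑ x ∈ s, F (s.erase x) := by
  rw [powersetCard_eq_image_erase hs, sum_image (erase_injOn s)]

namespace WSC

variable {V : Type*} [DecidableEq V] [Fintype V] {d : ℕ} (X : WSC V d)

def facets : Finset (Finset V) := X.faces.filter (·.card = d + 1)

theorem sum_weight_facets : ∑ β ∈ X.facets, X.weight β = 1 := X.weight_sum

noncomputable def starSum (g : Finset V → ℝ) (α : Finset V) : ℝ :=
  ∑ β ∈ X.facets with α ⊆ β, X.weight β * g β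

theorem weight_nonneg (β : Finset V) : 0 ≤ X.weight β := by
  by_cases h : β ∈ X.faces ∧ β.card = d + 1
  · exact (X.weight_pos β h.1 h.2).le
  · rw [X.weight_zero β (by tauto)]

theorem starSum_one_pos {α : Finset V} (hα : α ∈ X.faces) : 0 < X.starSum 1 α := by
  obtain ⟨β, hβ, hαβ, hcard⟩ := X.pure α hα
  refine sum_pos' (fun β _ => by simpa using X.weight_nonneg β) ⟨β, ?_, ?_⟩
  · simp [facets, hβ, hcard, hαβ]
  · simpa using X.weight_pos β hβ hcard

theorem W_top : X.W (d + 1) = X.weight := by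
  simp [W, Waux]

theorem W_ridge (α : Finset V) : X.W d α = X.starSum 1 α / (d + 1) := by
  simp only [W, show d + 1 - d = 1 by omega, Waux, Nat.sub_zero, starSum, facets, filter_filter,
    Pi.one_apply, mul_one]
  rw [one_div_mul_eq_div]
  push_cast
  congr 2
  exact filter_congr fun β _ => and_comm

theorem inn_top (f g : Finset V → ℝ) :
    X.inn (d + 1) f g = ∑ β ∈ X.facets, X.weight β * f β * g β := by
  simp [inn, W_top, facets]

theorem inn_self_nonneg (f : Finset V → ℝ) : 0 ≤ X.inn (d + 1) f f := by
  rw [inn_top]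
  exact sum_nonneg fun β _ => by
    rw [mul_assoc]
    exact mul_nonneg (X.weight_nonneg β) (mul_self_nonneg _)

theorem downOp_of_card_eq_dim (g : Finset V → ℝ) {α : Finset V} (hα : #α = d) :
    X.downOp g α = X.starSum g α / X.starSum 1 α := by
  simp only [downOp, hα, W_top, W_ridge, starSum, facets, filter_filter, ← sum_div]
  rw [mul_div_cancel₀ _ (by positivity)]
  congr 2
  exact filter_congr fun β _ => and_comm

theorem sum_faces_card_sum_facets_comm (k : ℕ) (F : Finset V → Finset V → ℝ) :
    ∑ α ∈ X.faces with #α = k, ∑ β ∈ X.facets with α ⊆ β, F α β =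
      ∑ β ∈ X.facets, ∑ α ∈ β.powersetCard k, F α β := by
  refine sum_comm' fun α β => ?_
  simp only [facets, mem_filter, mem_powersetCard]
  constructor
  · rintro ⟨⟨-, hk⟩, ⟨hβ, hd⟩, hαβ⟩
    exact ⟨⟨hαβ, hk⟩, hβ, hd⟩
  · rintro ⟨⟨hαβ, hk⟩, hβ, hd⟩
    exact ⟨⟨X.down_closed β hβ α hαβ, hk⟩, ⟨hβ, hd⟩, hαβ⟩

theorem sum_starSum (k : ℕ) (g : Finset V → ℝ) :
    ∑ α ∈ X.faces with #α = k, X.starSum g α =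
      (d + 1).choose k * ∑ β ∈ X.facets, X.weight β * g β := by
  simp only [starSum]
  rw [sum_faces_card_sum_facets_comm, mul_sum]
  refine sum_congr rfl fun β hβ => ?_
  rw [sum_const, card_powersetCard, (mem_filter.1 hβ).2, nsmul_eq_mul]

theorem starSum_nonneg {g : Finset V → ℝ} (hg : ∀ β, 0 ≤ g β) (α : Finset V) :
    0 ≤ X.starSum g α :=
  sum_nonneg fun β _ => mul_nonneg (X.weight_nonneg β) (hg β)

theorem inn_downUp (f g : Finset V → ℝ) :
    X.inn (d + 1) f (X.downUp g) =
      (∑ α ∈ X.faces with #α = d, X.starSum f α * X.starSum g α / X.starSum 1 α) / (d + 1) := by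
  calc X.inn (d + 1) f (X.downUp g)
      = ∑ β ∈ X.facets, ∑ α ∈ β.powersetCard d,
          X.weight β * f β * (X.starSum g α / X.starSum 1 α) / (d + 1) := by
        rw [inn_top]
        refine sum_congr rfl fun β hβ => ?_
        have hβd : #β = d + 1 := (mem_filter.1 hβ).2
        have herase : ∀ x ∈ β, #(β.erase x) = d := fun x hx => by
          rw [card_erase_of_mem hx, hβd, Nat.add_sub_cancel]
        rw [sum_powersetCard_eq_sum_erase hβd, downUp, upOp, hβd, mul_sum, mul_sum]
        refine sum_congr rfl fun x hx => ?_
        rw [X.downOp_of_card_eq_dim g (herase x hx)]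
        push_cast
        ring
    _ = ∑ α ∈ X.faces with #α = d, ∑ β ∈ X.facets with α ⊆ β,
          X.weight β * f β * (X.starSum g α / X.starSum 1 α) / (d + 1) :=
        (X.sum_faces_card_sum_facets_comm d _).symm
    _ = _ := by
        rw [sum_div]
        refine sum_congr rfl fun α _ => ?_
        rw [← sum_div, ← sum_mul, ← starSum]
        ring

theorem inn_downUp_self_le (f : Finset V → ℝ) :
    X.inn (d + 1) f (X.downUp f) ≤ X.inn (d + 1) f f := by
  have hCS : ∀ α, X.starSum f α * X.starSum f α / X.starSum 1 α ≤ X.starSum (f * f) α := by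
    intro α
    refine div_le_of_le_mul₀ (X.starSum_nonneg (fun _ => zero_le_one) α)
      (X.starSum_nonneg (fun β => mul_self_nonneg (f β)) α) ?_
    rw [← sq, mul_comm]
    refine sum_sq_le_sum_mul_sum_of_sq_le_mul _ (fun β _ => by simpa using X.weight_nonneg β)
      (fun β _ => mul_nonneg (X.weight_nonneg β) (mul_self_nonneg (f β))) fun β _ => ?_
    simp only [Pi.one_apply, Pi.mul_apply]
    exact le_of_eq (by ring)
  calc X.inn (d + 1) f (X.downUp f)
      ≤ (∑ α ∈ X.faces with #α = d, X.starSum (f * f) α) / (d + 1) := by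
        rw [inn_downUp]
        gcongr with α
        exact hCS α
    _ = X.inn (d + 1) f f := by
        rw [sum_starSum, Nat.choose_succ_self_right, inn_top]
        push_cast
        rw [mul_div_cancel_left₀ _ (by positivity)]
        simp only [Pi.mul_apply, mul_assoc]

theorem rayleigh_le_lam2_downUp {f : Finset V → ℝ} (hf1 : X.inn (d + 1) f (fun _ => 1) = 0)
    (hf : X.inn (d + 1) f f ≠ 0) :
    X.inn (d + 1) f (X.downUp f) / X.inn (d + 1) f f ≤ X.lam2 (d + 1) X.downUp := by
  refine le_csSup ⟨1, ?_⟩ ⟨f, hf1, hf, rfl⟩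
  rintro r ⟨g, -, -, rfl⟩
  exact div_le_one_of_le₀ (X.inn_downUp_self_le g) (X.inn_self_nonneg g)

theorem inn_sub_const_one (g : Finset V → ℝ) (c : ℝ) :
    X.inn (d + 1) (fun β => g β - c) (fun _ => 1) = X.inn (d + 1) g (fun _ => 1) - c := by
  simp only [inn_top, mul_one, mul_sub, sum_sub_distrib, ← sum_mul, sum_weight_facets, one_mul]

theorem inn_sub_const_self (g : Finset V → ℝ) (c : ℝ) :
    X.inn (d + 1) (fun β => g β - c) (fun β => g β - c) =
      X.inn (d + 1) g g - 2 * c * X.inn (d + 1) g (fun _ => 1) + c ^ 2 := by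
  simp only [inn_top]
  calc ∑ β ∈ X.facets, X.weight β * (g β - c) * (g β - c)
      = ∑ β ∈ X.facets,
          (X.weight β * g β * g β - 2 * c * (X.weight β * g β * 1) + c ^ 2 * X.weight β) :=
        sum_congr rfl fun β _ => by ring
    _ = _ := by
        rw [sum_add_distrib, sum_sub_distrib, ← mul_sum, ← mul_sum, X.sum_weight_facets, mul_one]

theorem starSum_sub_const (g : Finset V → ℝ) (c : ℝ) (α : Finset V) :
    X.starSum (fun β => g β - c) α = X.starSum g α - c * X.starSum 1 α := by
  simp only [starSum, mul_sub, sum_sub_distrib, mul_sum, Pi.one_apply, mul_one]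
  congr 1
  exact sum_congr rfl fun β _ => mul_comm _ _

theorem inn_sub_const_downUp (g : Finset V → ℝ) (c : ℝ) :
    X.inn (d + 1) (fun β => g β - c) (X.downUp fun β => g β - c) =
      X.inn (d + 1) g (X.downUp g) - 2 * c * X.inn (d + 1) g (fun _ => 1) + c ^ 2 := by
  have hexpand : ∀ α ∈ X.faces.filter (#· = d),
      X.starSum (fun β => g β - c) α * X.starSum (fun β => g β - c) α / X.starSum 1 α =
        X.starSum g α * X.starSum g α / X.starSum 1 α - 2 * c * X.starSum g α
          + c ^ 2 * X.starSum 1 α := by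
    intro α hα
    have hQ := (X.starSum_one_pos (mem_filter.1 hα).1).ne'
    rw [starSum_sub_const]
    field_simp
    ring
  have hT := X.sum_starSum d g
  have hQ := X.sum_starSum d 1
  simp only [Nat.choose_succ_self_right, Pi.one_apply, mul_one, sum_weight_facets] at hT hQ
  rw [inn_downUp, inn_downUp, sum_congr rfl hexpand, sum_add_distrib, sum_sub_distrib,
    ← mul_sum, ← mul_sum, hT, hQ, inn_top]
  simp only [mul_one]
  push_cast
  field_simp

def starIndicator (v : V) (β : Finset V) : ℝ := if v ∈ β then 1 else 0

theorem starSum_starIndicator_of_mem {v : V} {α : Finset V} (hv : v ∈ α) :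
    X.starSum (starIndicator v) α = X.starSum 1 α :=
  sum_congr rfl fun β hβ => by simp [starIndicator, (mem_filter.1 hβ).2 hv]

theorem inn_starIndicator_one (v : V) :
    X.inn (d + 1) (starIndicator v) (fun _ => 1) = X.starSum 1 {v} := by
  simp [inn_top, starSum, starIndicator, sum_filter, singleton_subset_iff]

theorem inn_starIndicator_self (v : V) :
    X.inn (d + 1) (starIndicator v) (starIndicator v) = X.starSum 1 {v} := by
  rw [← inn_starIndicator_one, inn_top, inn_top]
  refine sum_congr rfl fun β _ => ?_
  by_cases hv : v ∈ β <;> simp [starIndicator, hv]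

theorem sum_ridges_mem_starSum_one (v : V) :
    ∑ α ∈ X.faces with #α = d, (if v ∈ α then X.starSum 1 α else 0) = d * X.starSum 1 {v} := by
  calc ∑ α ∈ X.faces with #α = d, (if v ∈ α then X.starSum 1 α else 0)
      = ∑ α ∈ X.faces with #α = d, ∑ β ∈ X.facets with α ⊆ β,
          if v ∈ α then X.weight β else 0 := by
        refine sum_congr rfl fun α _ => ?_
        split_ifs <;> simp [starSum]
    _ = ∑ β ∈ X.facets, ∑ x ∈ β, if v ∈ β.erase x then X.weight β else 0 := by
        rw [sum_faces_card_sum_facets_comm]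
        exact sum_congr rfl fun β hβ => sum_powersetCard_eq_sum_erase (mem_filter.1 hβ).2 _
    _ = ∑ β ∈ X.facets, if v ∈ β then d * X.weight β else 0 := by
        refine sum_congr rfl fun β hβ => ?_
        by_cases hv : v ∈ β
        · have hcard : #(β.filter (fun x => v ≠ x)) = d := by
            rw [filter_ne, card_erase_of_mem hv, (mem_filter.1 hβ).2, Nat.add_sub_cancel]
          simp [mem_erase, hv, sum_ite, hcard]
        · simp [mem_erase, hv]
    _ = d * X.starSum 1 {v} := by
        simp [starSum, sum_filter, singleton_subset_iff, mul_sum]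

theorem inn_starIndicator_downUp_ge (v : V) :
    d * X.starSum 1 {v} / (d + 1) ≤
      X.inn (d + 1) (starIndicator v) (X.downUp (starIndicator v)) := by
  rw [inn_downUp, ← sum_ridges_mem_starSum_one]
  gcongr with α hα
  split_ifs with hv
  · rw [X.starSum_starIndicator_of_mem hv, mul_self_div_self]
  · exact div_nonneg (mul_self_nonneg _) (X.starSum_nonneg (fun _ => zero_le_one) α)

theorem exists_vertex_starSum_one_le_half
    (hn : 2 * (d + 1) ≤ (X.faces.filter (fun α => α.card = 1)).card) :
    ∃ v, {v} ∈ X.faces ∧ X.starSum 1 {v} ≤ 1 / 2 := by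
  have hsum := X.sum_starSum 1 1
  simp only [Nat.choose_one_right, Pi.one_apply, mul_one, sum_weight_facets] at hsum
  have hne : (X.faces.filter (fun α => α.card = 1)).Nonempty := card_pos.1 (by omega)
  obtain ⟨σ, hσ, hσc⟩ := exists_le_of_sum_le (g := fun _ => (1 / 2 : ℝ)) hne (by
      rw [hsum, sum_const, nsmul_eq_mul]
      have : (2 * (d + 1) : ℝ) ≤ #(X.faces.filter (fun α => α.card = 1)) := by exact_mod_cast hn
      push_cast
      linarith)
  obtain ⟨v, rfl⟩ := card_eq_one.1 (mem_filter.1 hσ).2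
  exact ⟨v, (mem_filter.1 hσ).1, hσc⟩

end WSC

/-- **Proposition (near tightness).** Let `(X, Π)` be a weighted pure
`d`-dimensional simplicial complex with `n = |X(0)|` vertices.  If `2(d+1) ≤ n`,
then `λ₂(P∨_d) ≥ 1 - 2/(d+1)`. -/
theorem lam2_downUp_top_ge {V : Type*} [DecidableEq V] [Fintype V] {d : ℕ}
    (X : WSC V d)
    (hn : 2 * (d + 1) ≤ (X.faces.filter (fun α => α.card = 1)).card) :
    1 - 2 / ((d : ℝ) + 1) ≤ X.lam2 (d + 1) X.downUp := by
  obtain ⟨v, hv, hc⟩ := X.exists_vertex_starSum_one_le_half hn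
  set c := X.starSum 1 {v}
  have hc0 : 0 < c := X.starSum_one_pos hv
  set f : Finset V → ℝ := fun β => WSC.starIndicator v β - c
  have hff : X.inn (d + 1) f f = c * (1 - c) := by
    rw [X.inn_sub_const_self, X.inn_starIndicator_self, X.inn_starIndicator_one]
    ring
  have hpos : 0 < c * (1 - c) := by nlinarith
  have hf1 : X.inn (d + 1) f (fun _ => 1) = 0 := by
    rw [X.inn_sub_const_one, X.inn_starIndicator_one, sub_self]
  refine le_trans ?_ (X.rayleigh_le_lam2_downUp hf1 (hff ▸ hpos.ne'))
  rw [hff, le_div_iff₀ hpos, X.inn_sub_const_downUp, X.inn_starIndicator_one]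
  have hgap : (1 - 2 / ((d : ℝ) + 1)) * (c * (1 - c)) =
      d * c / (d + 1) - c ^ 2 - c * (1 - 2 * c) / (d + 1) := by
    field_simp
    ring
  have hslack : 0 ≤ c * (1 - 2 * c) / (d + 1) := by
    have : 0 ≤ 1 - 2 * c := by linarith
    positivity
  linarith [X.inn_starIndicator_downUp_ge v]
end

section
/- Let (X, Π) be a weighted pure d-dimensional simplicial complex, let 0 ≤ j ≤ d−1, and let f ∈ ℝ^{X(j)}. For α ∈ X(j−1), let f_α ∈ ℝ^{X_α(0)} be defined by f_α(x) = f(α ∪ {x}), and let J_α f_α denote the constant vector on X_α(0) with value E_{x ∼ Π^α_0}[f_α(x)]. Then the following three identities hold (Garland decomposition): (1) ⟨f, f⟩_{Π_j} = E_{α ∼ Π_{j−1}} [⟨f_α, f_α⟩_{Π^α_0}]; (2) ⟨f, P∨_j f⟩_{Π_j} = E_{α ∼ Π_{j−1}} [⟨f_α, J_α f_α⟩_{Π^α_0}]; (3) ⟨f, N_j f⟩_{Π_j} = E_{α ∼ Π_{j−1}} [⟨f_α, M_α f_α⟩_{Π^α_0}]. -/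
/-!
Each face `β ∈ X(j)` arises as `α ∪ {x}` with `α ∈ X(j-1)` in exactly `j + 1` ways, and
`Π_j(β) / (j + 1) = Π_{j-1}(α) Π^α_0(x)`. So a `Π_j`-average of a quantity attached to the pairs
`(β, x ∈ β)` is a `Π_{j-1}`-average of averages over links. All three walks have this shape:
the identity trivially; `P∨_j` removes `x` and then averages `f` over the link of `α = β - x`,
which is `J_α f_α`; and `N_j` removes some `z ∈ β` and adds `y` from the link of `β`, a step
with probability `Π^β_0(y) = M_{β - z}(z, y)`.
-/

open Finset

namespace WSC

variable {V : Type*} [DecidableEq V]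

lemma upOp_insert (f : Finset V → ℝ) {β : Finset V} {y : V} (hy : y ∉ β) :
    upOp f (insert y β) = (f β + ∑ z ∈ β, f (insert y (β.erase z))) / (β.card + 1) := by
  have herase : ∀ z ∈ β, f ((insert y β).erase z) = f (insert y (β.erase z)) := fun z hz => by
    rw [erase_insert_of_ne (ne_of_mem_of_not_mem hz hy).symm]
  rw [upOp, card_insert_of_notMem hy, sum_insert hy, erase_insert hy, sum_congr rfl herase]
  push_cast
  ring

variable [Fintype V] {d : ℕ} (X : WSC V d)

lemma mem_linkVerts {α : Finset V} {x : V} :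
    x ∈ X.linkVerts α ↔ x ∉ α ∧ insert x α ∈ X.faces := by
  simp [linkVerts]

lemma Waux_nonneg : ∀ (t : ℕ) (β : Finset V), 0 ≤ X.Waux t β
  | 0, β => by
    by_cases h : β ∈ X.faces ∧ β.card = d + 1
    · exact (X.weight_pos β h.1 h.2).le
    · exact (X.weight_zero β (by tauto)).ge
  | t + 1, β => mul_nonneg (by positivity) (sum_nonneg fun γ _ => Waux_nonneg t γ)

lemma W_nonneg (m : ℕ) (α : Finset V) : 0 ≤ X.W m α :=
  X.Waux_nonneg _ α

lemma W_eq_sum_cofaces {m : ℕ} (hm : m ≤ d) (α : Finset V) :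
    X.W m α = (1 / ((m + 1 : ℕ) : ℝ)) *
      ∑ β ∈ X.faces.filter (fun β => α ⊆ β ∧ β.card = m + 1), X.W (m + 1) β := by
  obtain ⟨t, rfl⟩ : ∃ t, d = m + t := ⟨d - m, by omega⟩
  have h1 : m + t + 1 - m = t + 1 := by omega
  have h2 : m + t + 1 - t = m + 1 := by omega
  have h3 : m + t + 1 - (m + 1) = t := by omega
  simp only [W, h1, h3, Waux, h2]

lemma sum_cofaces_eq_sum_linkVerts (α : Finset V) (g : Finset V → ℝ) :
    ∑ β ∈ X.faces.filter (fun β => α ⊆ β ∧ β.card = α.card + 1), g β =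
      ∑ x ∈ X.linkVerts α, g (insert x α) := by
  have hcofaces : X.faces.filter (fun β => α ⊆ β ∧ β.card = α.card + 1) =
      (X.linkVerts α).image (insert · α) := by
    ext β
    simp only [mem_filter, mem_image, mem_linkVerts]
    constructor
    · rintro ⟨hβ, hαβ, hcard⟩
      obtain ⟨x, hxα, rfl⟩ := exists_eq_insert_iff.2 ⟨hαβ, hcard.symm⟩
      exact ⟨x, ⟨hxα, hβ⟩, rfl⟩
    · rintro ⟨x, ⟨hxα, hx⟩, rfl⟩
      exact ⟨hx, subset_insert x α, card_insert_of_notMem hxα⟩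
  rw [hcofaces, sum_image fun x hx y _ hxy => (insert_inj (X.mem_linkVerts.1 hx).1).1 hxy]

lemma sum_W_insert_linkVerts {α : Finset V} (hα : α.card ≤ d) :
    ∑ x ∈ X.linkVerts α, X.W (α.card + 1) (insert x α) = (α.card + 1) * X.W α.card α := by
  rw [X.W_eq_sum_cofaces hα, sum_cofaces_eq_sum_linkVerts]
  push_cast
  field_simp

lemma W_pos {α : Finset V} (hα : α ∈ X.faces) (hcard : α.card ≤ d + 1) :
    0 < X.W α.card α := by
  obtain ⟨t, ht⟩ : ∃ t, α.card + t = d + 1 := ⟨d + 1 - α.card, by omega⟩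
  induction t generalizing α with
  | zero =>
    rw [add_zero] at ht
    have hW : X.W α.card α = X.weight α := by simp [W, ht, Waux]
    exact hW ▸ X.weight_pos α hα ht
  | succ t ih =>
    obtain ⟨σ, hσ, hασ, hσcard⟩ := X.pure α hα
    obtain ⟨x, hxσ, hxα⟩ := exists_of_ssubset
      (ssubset_of_subset_of_ne hασ (by rintro rfl; omega))
    have hx : x ∈ X.linkVerts α :=
      X.mem_linkVerts.2 ⟨hxα, X.down_closed σ hσ _ (insert_subset hxσ hασ)⟩
    have hcard' : (insert x α).card = α.card + 1 := card_insert_of_notMem hxα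
    have hpos : 0 < ∑ y ∈ X.linkVerts α, X.W (α.card + 1) (insert y α) :=
      sum_pos' (fun y _ => X.W_nonneg _ _) ⟨x, hx, hcard' ▸
        ih (X.mem_linkVerts.1 hx).2 (by omega) (by omega)⟩
    rw [X.sum_W_insert_linkVerts (by omega)] at hpos
    exact pos_of_mul_pos_right hpos (by positivity)

lemma sum_sum_erase_eq_sum_sum_linkVerts (m : ℕ) (F : Finset V → V → ℝ) :
    ∑ β ∈ X.faces.filter (fun β => β.card = m + 1), ∑ x ∈ β, F (β.erase x) x =
      ∑ α ∈ X.faces.filter (fun α => α.card = m), ∑ x ∈ X.linkVerts α, F α x := by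
  rw [sum_sigma', sum_sigma']
  refine sum_nbij' (fun p => ⟨p.1.erase p.2, p.2⟩) (fun p => ⟨insert p.2 p.1, p.2⟩)
    ?_ ?_ ?_ ?_ fun _ _ => rfl
  · rintro ⟨β, x⟩ hp
    simp only [mem_sigma, mem_filter, mem_linkVerts] at hp ⊢
    obtain ⟨⟨hβ, hβcard⟩, hx⟩ := hp
    refine ⟨⟨X.down_closed β hβ _ (erase_subset x β), ?_⟩, notMem_erase x β, ?_⟩
    · rw [card_erase_of_mem hx]; omega
    · rwa [insert_erase hx]
  · rintro ⟨α, x⟩ hp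
    simp only [mem_sigma, mem_filter, mem_linkVerts] at hp ⊢
    obtain ⟨⟨-, hαcard⟩, hxα, hx⟩ := hp
    exact ⟨⟨hx, by rw [card_insert_of_notMem hxα, hαcard]⟩, mem_insert_self x α⟩
  · rintro ⟨β, x⟩ hp
    simp only [mem_sigma] at hp
    simp [insert_erase hp.2]
  · rintro ⟨α, x⟩ hp
    simp only [mem_sigma, mem_filter, mem_linkVerts] at hp
    simp [erase_insert hp.2.1]

lemma linkPi_singleton {α : Finset V} {x : V} (hx : x ∉ α) :
    X.linkPi α {x} = X.W (α.card + 1) (insert x α) / ((α.card + 1) * X.W α.card α) := by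
  rw [linkPi, union_singleton, card_insert_of_notMem hx, Nat.choose_succ_self_right]
  push_cast
  ring

lemma linkPi_pair {α : Finset V} {x y : V} (hx : x ∉ α) (hy : y ∉ insert x α) :
    X.linkPi α {x, y} = 2 * X.W (α.card + 2) (insert y (insert x α)) /
      ((α.card + 2) * (α.card + 1) * X.W α.card α) := by
  have hunion : α ∪ {x, y} = insert y (insert x α) := by ext; simp; tauto
  have hcard : (insert y (insert x α)).card = α.card + 2 := by
    rw [card_insert_of_notMem hy, card_insert_of_notMem hx]
  rw [linkPi, hunion, hcard, ← Nat.choose_symm (by omega), Nat.add_sub_cancel_left,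
    Nat.cast_choose_two]
  push_cast
  rw [div_mul_eq_mul_div, div_div_eq_mul_div]
  ring

lemma W_mul_linkPi_singleton {α : Finset V} {x : V} (hx : x ∉ α) (hα : X.W α.card α ≠ 0) :
    X.W α.card α * X.linkPi α {x} = X.W (α.card + 1) (insert x α) / (α.card + 1) := by
  rw [X.linkPi_singleton hx]
  field_simp

lemma sum_linkPi_singleton {α : Finset V} (hα : α ∈ X.faces) (hcard : α.card ≤ d) :
    ∑ x ∈ X.linkVerts α, X.linkPi α {x} = 1 := by
  rw [sum_congr rfl fun x hx => X.linkPi_singleton (X.mem_linkVerts.1 hx).1, ← sum_div,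
    X.sum_W_insert_linkVerts hcard]
  exact div_self (mul_pos (by positivity) (X.W_pos hα (by omega))).ne'

lemma downOp_apply (g : Finset V → ℝ) (α : Finset V) :
    X.downOp g α = ∑ x ∈ X.linkVerts α, X.linkPi α {x} * g (insert x α) := by
  rw [downOp, sum_cofaces_eq_sum_linkVerts]
  refine sum_congr rfl fun x hx => ?_
  rw [X.linkPi_singleton (X.mem_linkVerts.1 hx).1, div_mul_eq_mul_div]

lemma linkWalk_eq_linkJ_insert {α : Finset V} {x : V} (hx : x ∉ α) (hα : X.W α.card α ≠ 0)
    (g : V → ℝ) : X.linkWalk α g x = X.linkJ (insert x α) g x := by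
  have hverts : (X.linkVerts α).filter (fun y => y ≠ x ∧ insert y (insert x α) ∈ X.faces) =
      X.linkVerts (insert x α) := by
    ext y
    simp only [mem_filter, mem_linkVerts, mem_insert, not_or]
    constructor
    · rintro ⟨⟨hyα, -⟩, hyx, hy⟩
      exact ⟨⟨hyx, hyα⟩, hy⟩
    · rintro ⟨⟨hyx, hyα⟩, hy⟩
      exact ⟨⟨hyα, X.down_closed _ hy _ (insert_subset_insert y (subset_insert x α))⟩, hyx, hy⟩
  rw [linkWalk, linkJ, hverts]
  refine sum_congr rfl fun y hy => ?_
  have hy' := (X.mem_linkVerts.1 hy).1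
  rw [X.linkPi_pair hx hy', X.linkPi_singleton hx, X.linkPi_singleton hy',
    card_insert_of_notMem hx]
  rcases eq_or_ne (X.W (α.card + 1) (insert x α)) 0 with h | h
  · simp [h]
  · push_cast
    field_simp
    ring

/-- The laziness of `P∧_k` is the `1/(k+2)` chance of removing the vertex just added. -/
lemma nonLazy_apply (f : Finset V → ℝ) {k : ℕ} {β : Finset V} (hβ : β ∈ X.faces)
    (hcard : β.card = k + 1) (hk : k + 1 ≤ d) :
    X.nonLazy k f β =
      (∑ z ∈ β, ∑ y ∈ X.linkVerts β, X.linkPi β {y} * f (insert y (β.erase z))) / (k + 1) := by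
  have hupDown : X.upDown f β =
      (f β + ∑ z ∈ β, ∑ y ∈ X.linkVerts β, X.linkPi β {y} * f (insert y (β.erase z))) /
        (k + 2) := by
    rw [upDown, downOp_apply,
      sum_congr rfl fun y hy => by rw [upOp_insert f (X.mem_linkVerts.1 hy).1]]
    simp only [mul_div_assoc', ← sum_div, mul_add, sum_add_distrib, ← sum_mul,
      X.sum_linkPi_singleton hβ (by omega), one_mul, mul_sum]
    rw [sum_comm, hcard]
    push_cast
    ring_nf
  rw [nonLazy, hupDown]
  field_simp
  ring

theorem inn_eq_sum_W_mul_linkInner {j : ℕ} (hj : j ≤ d) (f g : Finset V → ℝ)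
    (H : Finset V → V → ℝ)
    (hg : ∀ β ∈ X.faces, β.card = j + 1 → g β = (∑ x ∈ β, H (β.erase x) x) / (j + 1)) :
    X.inn (j + 1) f g = ∑ α ∈ X.faces.filter (fun α => α.card = j),
      X.W j α * X.linkInner α (fun x => f (insert x α)) (H α) := by
  calc X.inn (j + 1) f g
      = ∑ β ∈ X.faces.filter (fun β => β.card = j + 1), ∑ x ∈ β,
          X.W (j + 1) (insert x (β.erase x)) * f (insert x (β.erase x)) *
            H (β.erase x) x / (j + 1) := by
        refine sum_congr rfl fun β hβ => ?_
        rw [mem_filter] at hβ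
        rw [hg β hβ.1 hβ.2, mul_div_assoc', mul_sum, sum_div]
        exact sum_congr rfl fun x hx => by rw [insert_erase hx]
    _ = ∑ α ∈ X.faces.filter (fun α => α.card = j), ∑ x ∈ X.linkVerts α,
          X.W (j + 1) (insert x α) * f (insert x α) * H α x / (j + 1) :=
        X.sum_sum_erase_eq_sum_sum_linkVerts j
          (fun α x => X.W (j + 1) (insert x α) * f (insert x α) * H α x / (j + 1))
    _ = _ := by
        refine sum_congr rfl fun α hα => ?_
        rw [mem_filter] at hα
        obtain ⟨hα, rfl⟩ := hα
        rw [linkInner, mul_sum]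
        refine sum_congr rfl fun x hx => ?_
        rw [← mul_assoc, ← mul_assoc, X.W_mul_linkPi_singleton (X.mem_linkVerts.1 hx).1
          (X.W_pos hα (by omega)).ne']
        ring

end WSC

/-- **Garland decomposition.** Let `(X, Π)` be a weighted pure `d`-dimensional
simplicial complex, `0 ≤ j ≤ d-1`, and `f : ℝ^{X(j)}`.  For `α ∈ X(j-1)` (a face of
cardinality `j`) let `f_α(x) = f(α ∪ {x})`.  Then:
(1) `⟨f, f⟩_{Π_j} = E_{α ∼ Π_{j-1}} ⟨f_α, f_α⟩_{Π^α_0}`;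
(2) `⟨f, P∨_j f⟩_{Π_j} = E_{α ∼ Π_{j-1}} ⟨f_α, J_α f_α⟩_{Π^α_0}`;
(3) `⟨f, N_j f⟩_{Π_j} = E_{α ∼ Π_{j-1}} ⟨f_α, M_α f_α⟩_{Π^α_0}`. -/
theorem garland_identities {V : Type*} [DecidableEq V] [Fintype V] {d : ℕ}
    (X : WSC V d) (j : ℕ) (hj : j < d) (f : Finset V → ℝ) :
    X.inn (j + 1) f f =
      ∑ α ∈ X.faces.filter (fun α => α.card = j), X.W j α *
        X.linkInner α (fun x => f (insert x α)) (fun x => f (insert x α)) ∧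
    X.inn (j + 1) f (X.downUp f) =
      ∑ α ∈ X.faces.filter (fun α => α.card = j), X.W j α *
        X.linkInner α (fun x => f (insert x α)) (X.linkJ α (fun x => f (insert x α))) ∧
    X.inn (j + 1) f (X.nonLazy j f) =
      ∑ α ∈ X.faces.filter (fun α => α.card = j), X.W j α *
        X.linkInner α (fun x => f (insert x α))
          (X.linkWalk α (fun x => f (insert x α))) := by
  refine ⟨X.inn_eq_sum_W_mul_linkInner hj.le f f (fun α x => f (insert x α)) ?_,
    X.inn_eq_sum_W_mul_linkInner hj.le f _ (fun α => X.linkJ α fun x => f (insert x α)) ?_,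
    X.inn_eq_sum_W_mul_linkInner hj.le f _ (fun α => X.linkWalk α fun x => f (insert x α)) ?_⟩
  · intro β _ hcard
    rw [sum_congr rfl fun x hx => by rw [insert_erase hx], sum_const, hcard, nsmul_eq_mul]
    push_cast
    field_simp
  · intro β _ hcard
    simp only [WSC.downUp, WSC.upOp, WSC.downOp_apply, hcard, WSC.linkJ]
    push_cast
    ring
  · intro β hβ hcard
    rw [X.nonLazy_apply f hβ hcard hj]
    refine congrArg (· / _) (sum_congr rfl fun z hz => ?_)
    have hface : β.erase z ∈ X.faces := X.down_closed β hβ _ (erase_subset z β)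
    have hcard' : (β.erase z).card ≤ d + 1 := by rw [card_erase_of_mem hz]; omega
    rw [X.linkWalk_eq_linkJ_insert (notMem_erase z β) (X.W_pos hface hcard').ne',
      insert_erase hz, WSC.linkJ]
end

section
/- Let M₁ = (E, I₁) and M₂ = (E, I₂) be two matroids with a common independent set of size r. Then for every common independent set S ∈ I₁ ∩ I₂, the number of elements y ∈ E ∖ S with S ∪ {y} ∈ I₁ ∩ I₂ is at least r − 2|S|. -/
open Finset

/-- A matroid on a finite ground set `E`, given by its (finite, nonempty, downward
closed) family of independent sets, satisfying the exchange property. -/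
structure FinMatroid (E : Type*) [Fintype E] [DecidableEq E] where
  ind : Finset (Finset E)
  empty_mem : ∅ ∈ ind
  subset_mem : ∀ S ∈ ind, ∀ T ⊆ S, T ∈ ind
  exchange : ∀ S ∈ ind, ∀ T ∈ ind, T.card < S.card →
    ∃ x ∈ S, x ∉ T ∧ insert x T ∈ ind

variable {E : Type*} [Fintype E] [DecidableEq E]

lemma FinMatroid.aug (M : FinMatroid E) :
    ∀ n (S T : Finset E), S ∈ M.ind → T ∈ M.ind → T.card - S.card = n →
      ∃ S', S' ∈ M.ind ∧ S ⊆ S' ∧ S' ⊆ S ∪ T ∧ T.card ≤ S'.card := by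
  intro n
  induction n with
  | zero =>
    intro S T hS hT h
    exact ⟨S, hS, subset_rfl, subset_union_left, Nat.le_of_sub_eq_zero h⟩
  | succ n ih =>
    intro S T hS hT h
    have hlt : S.card < T.card := by omega
    obtain ⟨x, hxT, hxS, hins⟩ := M.exchange T hT S hS hlt
    have hc : (insert x S).card = S.card + 1 := card_insert_of_notMem hxS
    obtain ⟨S', hS', hsub, hsub', hcard⟩ := ih (insert x S) T hins hT (by omega)
    refine ⟨S', hS', (subset_insert _ _).trans hsub, ?_, hcard⟩
    intro y hy
    have := hsub' hy
    simp only [mem_union, mem_insert] at this ⊢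
    rcases this with (rfl | h) | h
    · exact Or.inr hxT
    · exact Or.inl h
    · exact Or.inr h

lemma FinMatroid.ext_count (M : FinMatroid E) (S T : Finset E)
    (hS : S ∈ M.ind) (hT : T ∈ M.ind) :
    (T.card : ℤ) - S.card ≤ (((T \ S).filter (fun y => insert y S ∈ M.ind)).card : ℤ) := by
  obtain ⟨S', hS', hsub, hsub', hcard⟩ := M.aug (T.card - S.card) S T hS hT rfl
  have hkey : S' \ S ⊆ (T \ S).filter (fun y => insert y S ∈ M.ind) := by
    intro y hy
    rw [mem_sdiff] at hy
    have hyT : y ∈ T := by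
      have := hsub' hy.1
      rw [mem_union] at this
      tauto
    rw [mem_filter, mem_sdiff]
    refine ⟨⟨hyT, hy.2⟩, M.subset_mem S' hS' _ ?_⟩
    intro z hz
    rw [mem_insert] at hz
    rcases hz with rfl | hz
    · exact hy.1
    · exact hsub hz
  have h1 : (S' \ S).card = S'.card - S.card := card_sdiff_of_subset hsub
  have h2 := card_le_card hkey
  have h3 := card_le_card hsub
  omega

/-- `M` is the partition matroid with blocks the fibres of `b` and capacities `cap`:
a set is independent iff it meets the block `b⁻¹(i)` in at most `cap i` elements. -/
def IsPartitionWith (M : FinMatroid E) (b : E → ℕ) (cap : ℕ → ℕ) : Prop :=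
  ∀ S : Finset E, S ∈ M.ind ↔ ∀ i : ℕ, (S.filter (fun x => b x = i)).card ≤ cap i

/-- The common independent sets of `M₁` and `M₂` of size `k`. -/
def commonK (M₁ M₂ : FinMatroid E) (k : ℕ) : Finset (Finset E) :=
  (M₁.ind ∩ M₂.ind).filter (fun S => S.card = k)

/-- **Lemma (degree bound).** Let `M₁`, `M₂` be two matroids with a common
independent set of size `r`.  Then for every common independent set `S`, the number
of elements `y ∈ E ∖ S` with `S ∪ {y}` a common independent set is at least
`r - 2|S|`. -/
theorem common_extension_count (M₁ M₂ : FinMatroid E) (r : ℕ)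
    (hr : ∃ T ∈ M₁.ind ∩ M₂.ind, T.card = r)
    (S : Finset E) (hS : S ∈ M₁.ind ∩ M₂.ind) :
    (r : ℤ) - 2 * (S.card : ℤ) ≤
      ((Finset.univ.filter
        (fun y => y ∉ S ∧ insert y S ∈ M₁.ind ∩ M₂.ind)).card : ℤ) := by
  obtain ⟨T, hT, rfl⟩ := hr
  rw [mem_inter] at hT hS
  set A₁ := (T \ S).filter (fun y => insert y S ∈ M₁.ind) with hA₁
  set A₂ := (T \ S).filter (fun y => insert y S ∈ M₂.ind) with hA₂
  have e1 : (T.card : ℤ) - S.card ≤ (A₁.card : ℤ) := by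
    have := M₁.ext_count S T hS.1 hT.1
    convert this using 3
  have e2 : (T.card : ℤ) - S.card ≤ (A₂.card : ℤ) := by
    have := M₂.ext_count S T hS.2 hT.2
    convert this using 3
  have hsub : A₁ ∩ A₂ ⊆ Finset.univ.filter
      (fun y => y ∉ S ∧ insert y S ∈ M₁.ind ∩ M₂.ind) := by
    intro y hy
    rw [mem_inter, hA₁, hA₂, mem_filter, mem_filter, mem_sdiff] at hy
    rw [mem_filter]
    exact ⟨mem_univ _, hy.1.1.2, mem_inter.2 ⟨hy.1.2, hy.2.2⟩⟩
  have hu : A₁ ∪ A₂ ⊆ T \ S := union_subset (filter_subset _ _) (filter_subset _ _)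
  have hie := card_union_add_card_inter A₁ A₂
  have h4 := card_le_card hu
  have h5 := card_le_card hsub
  have h6 : (T \ S).card ≤ T.card := card_le_card (sdiff_subset)
  omega
end
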